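/- arXiv:2109.04567 — 4 statements merged into one kernel-verified Lean document; each statement's English description precedes it below -/
import Mathlib

section
/- Let G be a connected undirected graph with non-negative edge weights and cycle space of dimension ν. Suppose C₁, …, C_ν are cycles of G and S₁, …, S_ν are vectors in ℤ₂^E such that for every i with 1 ≤ i ≤ ν: (prefix orthogonality) ⟨C_j, S_i⟩ = 0 for all 1 ≤ j < i; (non-orthogonality) ⟨C_i, S_i⟩ = 1; and (shortness) C_i is a cycle of minimum weight among all cycles C of G with ⟨C, S_i⟩ = 1. Then {C₁, …, C_ν} is a minimum cycle basis of G. -/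
/-!
Pair chains with the test vectors: the matrix `(⟨C j, S i⟩)ᵢⱼ` is unitriangular, so the `C j`
are independent and, being `ν` many, form a basis of the cycle space. For any other cycle
basis `D`, writing each `C j` in terms of the `D k` factors the unitriangular matrix as
`(⟨D k, S i⟩)ᵢₖ * T`, so `(⟨D k, S i⟩)ᵢₖ` is invertible. A nonzero term of its determinant expansion is a
permutation `σ` with `⟨D (σ i), S i⟩ = 1` for all `i`; shortness gives
`w (C i) ≤ w (D (σ i))`, and summing over `i` proves minimality.
-/

open scoped Classical

noncomputable section

namespace PaperMCB

variable {V : Type*} [Fintype V] [DecidableEq V]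

/-- The boundary map sending a `ℤ₂`-chain of edges to the `ℤ₂`-chain of vertices
recording the parity of the degree of each vertex in the chain. -/
def boundaryMap (G : SimpleGraph V) :
    (G.edgeSet → ZMod 2) →ₗ[ZMod 2] (V → ZMod 2) :=
  Matrix.mulVecLin (Matrix.of fun (v : V) (e : G.edgeSet) =>
    if v ∈ (e : Sym2 V) then (1 : ZMod 2) else 0)

/-- The cycle space of a graph over `ℤ₂`: chains of edges in which every vertex
has even degree. -/
def cycleSpace (G : SimpleGraph V) : Submodule (ZMod 2) (G.edgeSet → ZMod 2) :=
  LinearMap.ker (boundaryMap G)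

/-- The weight of a cycle: the sum of the weights of its edges. -/
def cycleWeight (G : SimpleGraph V) (w : Sym2 V → ℝ) (c : G.edgeSet → ZMod 2) : ℝ :=
  ∑ e : G.edgeSet, if c e = 1 then w (e : Sym2 V) else 0

/-- The weight of a set of cycles: the sum of the weights of its elements. -/
def setWeight (G : SimpleGraph V) (w : Sym2 V → ℝ) (B : Finset (G.edgeSet → ZMod 2)) : ℝ :=
  ∑ c ∈ B, cycleWeight G w c

/-- A set of cycles is a cycle basis if it is linearly independent and spans the
cycle space. -/
def IsCycleBasis (G : SimpleGraph V) (B : Finset (G.edgeSet → ZMod 2)) : Prop :=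
  LinearIndependent (ZMod 2)
    (fun c : (B : Set (G.edgeSet → ZMod 2)) => (c : G.edgeSet → ZMod 2)) ∧
  Submodule.span (ZMod 2) (B : Set (G.edgeSet → ZMod 2)) = cycleSpace G

/-- A minimum cycle basis is a cycle basis of minimum total weight. -/
def IsMinCycleBasis (G : SimpleGraph V) (w : Sym2 V → ℝ)
    (B : Finset (G.edgeSet → ZMod 2)) : Prop :=
  IsCycleBasis G B ∧
  ∀ B' : Finset (G.edgeSet → ZMod 2), IsCycleBasis G B' →
    setWeight G w B ≤ setWeight G w B'

/-- The `ℤ₂` incidence vector of (the edge set of) a walk. -/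
def walkChain (G : SimpleGraph V) {u v : V} (W : G.Walk u v) : G.edgeSet → ZMod 2 :=
  fun e => if (e : Sym2 V) ∈ W.edges then 1 else 0

/-- The weight of a walk: the sum of the weights of its edges. -/
def walkWeight (w : Sym2 V → ℝ) {G : SimpleGraph V} {u v : V} (W : G.Walk u v) : ℝ :=
  (W.edges.map w).sum

/-- An elementary cycle: the incidence vector of the edge set of a closed walk that is
a graph cycle (connected, all degrees two). -/
def IsElementaryCycle (G : SimpleGraph V) (c : G.edgeSet → ZMod 2) : Prop :=
  ∃ (u : V) (W : G.Walk u u), W.IsCycle ∧ walkChain G W = c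

/-- A tight (isometric) cycle: an elementary cycle containing a shortest path between
every pair of its vertices. -/
def IsTight (G : SimpleGraph V) (w : Sym2 V → ℝ) (c : G.edgeSet → ZMod 2) : Prop :=
  ∃ (u : V) (W : G.Walk u u), W.IsCycle ∧ walkChain G W = c ∧
    ∀ x y : V, x ∈ W.support → y ∈ W.support →
      ∃ P : G.Walk x y, (∀ e ∈ P.edges, e ∈ W.edges) ∧
        ∀ Q : G.Walk x y, walkWeight w P ≤ walkWeight w Q

/-- The `ℤ₂` inner product of two edge chains. -/
def inner2 (G : SimpleGraph V) (x y : G.edgeSet → ZMod 2) : ZMod 2 :=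
  ∑ e : G.edgeSet, x e * y e

end PaperMCB

open Matrix Module

namespace Matrix
variable {ι R : Type*} [Fintype ι] [DecidableEq ι] [CommRing R]

theorem exists_perm_forall_ne_zero_of_det_ne_zero {A : Matrix ι ι R} (hA : A.det ≠ 0) :
    ∃ σ : Equiv.Perm ι, ∀ i, A i (σ i) ≠ 0 := by
  by_contra! h
  rw [← det_transpose, det_apply'] at hA
  refine hA (Finset.sum_eq_zero fun σ _ => ?_)
  obtain ⟨i, hi⟩ := h σ
  rw [Finset.prod_eq_zero (Finset.mem_univ i) hi, mul_zero]

end Matrix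

section Pairing
variable {ι R M : Type*} [Fintype ι] [CommRing R] [AddCommGroup M] [Module R M]

def pairingMatrix (φ : ι → Dual R M) (v : ι → M) : Matrix ι ι R :=
  Matrix.of fun i j => φ i (v j)

variable {φ : ι → Dual R M}

theorem det_pairingMatrix_eq_one [LinearOrder ι] {v : ι → M}
    (horth : ∀ i j, j < i → φ i (v j) = 0) (hdiag : ∀ i, φ i (v i) = 1) :
    (pairingMatrix φ v).det = 1 := by
  rw [det_of_isUpperTriangular (M := pairingMatrix φ v) horth]
  exact Finset.prod_eq_one fun i _ => hdiag i

theorem linearIndependent_of_isUnit_det_pairingMatrix [DecidableEq ι] {v : ι → M}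
    (h : IsUnit (pairingMatrix φ v).det) : LinearIndependent R v :=
  LinearIndependent.of_comp (LinearMap.pi φ) <| mulVec_injective_iff.mp <|
    mulVec_injective_of_isUnit <| (isUnit_iff_isUnit_det _).mpr h

theorem pairingMatrix_eq_mul_of_sum_smul {v d : ι → M}
    (T : Matrix ι ι R) (hT : ∀ j, ∑ k, T k j • d k = v j) :
    pairingMatrix φ v = pairingMatrix φ d * T := by
  ext i j
  simp [pairingMatrix, mul_apply, ← hT j, mul_comm]

theorem isUnit_det_pairingMatrix_of_mem_span [DecidableEq ι] {v d : ι → M}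
    (h : IsUnit (pairingMatrix φ v).det) (hv : ∀ j, v j ∈ Submodule.span R (Set.range d)) :
    IsUnit (pairingMatrix φ d).det := by
  choose T hT using fun j => (Submodule.mem_span_range_iff_exists_fun R).mp (hv j)
  rw [pairingMatrix_eq_mul_of_sum_smul (Matrix.of fun k j => T j k) hT, det_mul] at h
  exact isUnit_of_mul_isUnit_left h

theorem exists_perm_pairing_ne_zero [DecidableEq ι] [Nontrivial R] {v d : ι → M}
    (h : IsUnit (pairingMatrix φ v).det) (hv : ∀ j, v j ∈ Submodule.span R (Set.range d)) :
    ∃ σ : Equiv.Perm ι, ∀ i, φ i (d (σ i)) ≠ 0 :=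
  exists_perm_forall_ne_zero_of_det_ne_zero (isUnit_det_pairingMatrix_of_mem_span h hv).ne_zero

end Pairing

namespace PaperMCB

variable {V : Type*} [Fintype V] [DecidableEq V]

section

variable {G : SimpleGraph V}

omit [DecidableEq V] in
theorem setWeight_image (w : Sym2 V → ℝ) {ι : Type*} [Fintype ι] {C : ι → G.edgeSet → ZMod 2}
    (hC : Function.Injective C) :
    setWeight G w (Finset.image C Finset.univ) = ∑ i, cycleWeight G w (C i) :=
  Finset.sum_image fun _ _ _ _ h => hC h

theorem isCycleBasis_image_of_linearIndependent
    {C : Fin (finrank (ZMod 2) (cycleSpace G)) → G.edgeSet → ZMod 2}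
    (hC : ∀ i, C i ∈ cycleSpace G) (hli : LinearIndependent (ZMod 2) C) :
    IsCycleBasis G (Finset.image C Finset.univ) := by
  have hrange : ((Finset.image C Finset.univ : Finset _) : Set (G.edgeSet → ZMod 2)) =
      Set.range C := by simp
  rw [IsCycleBasis, hrange]
  refine ⟨(linearIndepOn_id_range_iff hli.injective).mpr hli, ?_⟩
  refine Submodule.eq_of_le_of_finrank_eq (Submodule.span_le.mpr (Set.range_subset_iff.mpr hC)) ?_
  rw [finrank_span_eq_card hli, Fintype.card_fin]

theorem IsCycleBasis.card_eq_finrank {B : Finset (G.edgeSet → ZMod 2)} (hB : IsCycleBasis G B) :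
    B.card = finrank (ZMod 2) (cycleSpace G) := by
  rw [← hB.2, finrank_span_finset_eq_card hB.1]

theorem IsCycleBasis.exists_injective_image_eq {B : Finset (G.edgeSet → ZMod 2)}
    (hB : IsCycleBasis G B) :
    ∃ d : Fin (finrank (ZMod 2) (cycleSpace G)) → G.edgeSet → ZMod 2,
      Function.Injective d ∧ Finset.image d Finset.univ = B := by
  let e := (B.equivFinOfCardEq hB.card_eq_finrank).symm
  refine ⟨fun k => e k, Subtype.val_injective.comp e.injective, ?_⟩
  ext c
  simp only [Finset.mem_image, Finset.mem_univ, true_and]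
  exact ⟨by rintro ⟨k, rfl⟩; exact (e k).2, fun hc => ⟨e.symm ⟨c, hc⟩, by simp⟩⟩

end

theorem depina_general (G : SimpleGraph V)
    (w : Sym2 V → ℝ)
    (C S : Fin (Module.finrank (ZMod 2) (cycleSpace G)) → (G.edgeSet → ZMod 2))
    (hC : ∀ i, C i ∈ cycleSpace G)
    (horth : ∀ i j, j < i → inner2 G (C j) (S i) = 0)
    (hnon : ∀ i, inner2 G (C i) (S i) = 1)
    (hshort : ∀ i, ∀ c ∈ cycleSpace G, inner2 G c (S i) = 1 →
      cycleWeight G w (C i) ≤ cycleWeight G w c) :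
    IsMinCycleBasis G w (Finset.image C Finset.univ) := by
  -- `φ i x` unfolds to `inner2 G x (S i)`, so the hypotheses apply to `φ` as they stand.
  let φ : Fin _ → Dual (ZMod 2) (G.edgeSet → ZMod 2) :=
    fun i => (dotProductBilin (ZMod 2) (ZMod 2)).flip (S i)
  have hdet : IsUnit (pairingMatrix φ C).det := by
    rw [det_pairingMatrix_eq_one horth hnon]
    exact isUnit_one
  have hli := linearIndependent_of_isUnit_det_pairingMatrix hdet
  refine ⟨isCycleBasis_image_of_linearIndependent hC hli, fun B hB => ?_⟩
  obtain ⟨d, hd, rfl⟩ := hB.exists_injective_image_eq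
  have hspan : Submodule.span (ZMod 2) (Set.range d) = cycleSpace G := by
    simpa using hB.2
  obtain ⟨σ, hσ⟩ := exists_perm_pairing_ne_zero hdet fun j => hspan.ge (hC j)
  rw [setWeight_image w hli.injective, setWeight_image w hd]
  calc ∑ i, cycleWeight G w (C i) ≤ ∑ i, cycleWeight G w (d (σ i)) :=
        Finset.sum_le_sum fun i _ => hshort i _ (hspan.le (Submodule.subset_span ⟨σ i, rfl⟩))
          (Fin.eq_one_of_ne_zero _ (hσ i))
    _ = ∑ k, cycleWeight G w (d k) := Equiv.sum_comp σ (fun k => cycleWeight G w (d k))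

/-- **de Pina's theorem.** If cycles `C₁, …, C_ν` and support vectors `S₁, …, S_ν`
satisfy prefix orthogonality, non-orthogonality and shortness, then `{C₁, …, C_ν}` is a
minimum cycle basis. -/
theorem depina (G : SimpleGraph V) (hG : G.Connected)
    (w : Sym2 V → ℝ) (hw : ∀ e, 0 ≤ w e)
    (C S : Fin (Module.finrank (ZMod 2) (cycleSpace G)) → (G.edgeSet → ZMod 2))
    (hC : ∀ i, C i ∈ cycleSpace G)
    (horth : ∀ i j, j < i → inner2 G (C j) (S i) = 0)
    (hnon : ∀ i, inner2 G (C i) (S i) = 1)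
    (hshort : ∀ i, ∀ c ∈ cycleSpace G, inner2 G c (S i) = 1 →
      cycleWeight G w (C i) ≤ cycleWeight G w c) :
    IsMinCycleBasis G w (Finset.image C Finset.univ) :=
  depina_general G w C S hC horth hnon hshort

end PaperMCB
end
end

section
/- Let G be a connected undirected graph with non-negative edge weights. Then there exists a minimum cycle basis of G all of whose elements are elementary cycles. -/
open scoped Classical

noncomputable section

namespace PaperMCB

variable {V : Type*} [Fintype V] [DecidableEq V]

/-!
Among the minimum cycle bases choose one, `B`, with the fewest edges in total,
`∑ b ∈ B, |supp b|`. Suppose some `c ∈ B` is not elementary. The subgraph carried by `c` is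
nonempty with all degrees even, so it is not a forest and contains an elementary cycle; peeling
such cycles off writes `c` as a sum of elementary cycles supported inside `supp c`. As `c` is not
in the span of `B \ {c}`, neither is one of these cycles, `x`, and exchanging `c` for `x` yields
a cycle basis.
Weights are non-negative and `supp x ⊊ supp c`, so the new basis is again minimum but has fewer
edges in total.
-/

open Function Submodule

section ZModTwo

variable {ι : Type*}

theorem zmod_two_ne_zero_iff_eq_one (a : ZMod 2) : a ≠ 0 ↔ a = 1 := by
  revert a; decide

theorem eq_of_support_eq {x c : ι → ZMod 2} (h : support x = support c) : x = c := by
  funext e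
  have he : x e ≠ 0 ↔ c e ≠ 0 := Set.ext_iff.1 h e
  revert he
  generalize x e = a
  generalize c e = b
  revert a b
  decide

theorem support_ssubset_of_subset_of_ne {x c : ι → ZMod 2} (h : support x ⊆ support c)
    (hne : x ≠ c) : support x ⊂ support c :=
  Set.ssubset_iff_subset_ne.2 ⟨h, fun heq => hne (eq_of_support_eq heq)⟩

theorem support_add_of_subset {x c : ι → ZMod 2} (h : support x ⊆ support c) :
    support (c + x) = support c \ support x := by
  ext e
  have hxc : x e ≠ 0 → c e ≠ 0 := @h e
  simp only [mem_support, Pi.add_apply, Set.mem_sdiff]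
  revert hxc
  generalize x e = a
  generalize c e = b
  revert a b
  decide

end ZModTwo

theorem span_insert_sdiff_singleton_eq {K M : Type*} [DivisionRing K] [AddCommGroup M]
    [Module K M] {s : Set M} {c x : M} (hx : x ∈ span K s) (hxc : x ∉ span K (s \ {c})) :
    span K (insert x (s \ {c})) = span K s := by
  have hs : span K s ≤ span K (insert c (s \ {c})) := by
    rw [Set.insert_sdiff_singleton]
    exact span_mono (Set.subset_insert c s)
  refine le_antisymm (span_le.2 (Set.insert_subset hx (Set.sdiff_subset.trans subset_span)))
    (span_le.2 fun y hy => ?_)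
  by_cases hyc : y = c
  · subst hyc
    exact mem_span_insert_exchange (hs hx) hxc
  · exact subset_span (Set.mem_insert_of_mem _ ⟨hy, hyc⟩)

theorem sum_insert_erase_add {α β : Type*} [DecidableEq α] [AddCommMonoid β] {s : Finset α}
    {c x : α} (f : α → β) (hc : c ∈ s) (hx : x ∉ s.erase c) :
    (∑ y ∈ insert x (s.erase c), f y) + f c = (∑ y ∈ s, f y) + f x := by
  rw [Finset.sum_insert hx, ← Finset.add_sum_erase s f hc]
  abel

section CycleSpace

variable {G : SimpleGraph V}

theorem walkChain_mem_cycleSpace {u : V} {W : G.Walk u u} (hW : W.IsTrail) :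
    walkChain G W ∈ cycleSpace G := by
  rw [cycleSpace, LinearMap.mem_ker]
  funext v
  have hcount : (W.edges.countP fun e => v ∈ e) =
      (Finset.univ.filter fun e : G.edgeSet =>
        v ∈ (e : Sym2 V) ∧ (e : Sym2 V) ∈ W.edges).card := by
    rw [List.countP_eq_length_filter, ← List.toFinset_card_of_nodup (hW.edges_nodup.filter _),
      ← Finset.card_map (Embedding.subtype _)]
    congr 1
    ext e
    simp only [List.mem_toFinset, List.mem_filter, Finset.mem_map, Finset.mem_filter,
      Finset.mem_univ, true_and, Embedding.coe_subtype, decide_eq_true_eq]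
    constructor
    · rintro ⟨he, hv⟩
      exact ⟨⟨e, W.edges_subset_edgeSet he⟩, ⟨hv, he⟩, rfl⟩
    · rintro ⟨e, ⟨hv, he⟩, rfl⟩
      exact ⟨he, hv⟩
  have heven := (hW.even_countP_edges_iff v).2 fun h => absurd rfl h
  rw [hcount, ← ZMod.natCast_eq_zero_iff_even] at heven
  simp only [boundaryMap, Matrix.mulVecLin_apply, Matrix.mulVec, dotProduct, Matrix.of_apply,
    walkChain, Pi.zero_apply, ite_mul, one_mul, zero_mul, ← ite_and]
  rw [Finset.sum_boole]
  exact heven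

omit [Fintype V] in
theorem support_walkChain {u v : V} (W : G.Walk u v) :
    support (walkChain G W) = {e : G.edgeSet | (e : Sym2 V) ∈ W.edges} := by
  ext e
  simp [walkChain]

theorem IsElementaryCycle.mem_cycleSpace {c : G.edgeSet → ZMod 2} (hc : IsElementaryCycle G c) :
    c ∈ cycleSpace G := by
  obtain ⟨u, W, hW, rfl⟩ := hc
  exact walkChain_mem_cycleSpace hW.isTrail

omit [Fintype V] in
theorem IsElementaryCycle.support_nonempty {c : G.edgeSet → ZMod 2}
    (hc : IsElementaryCycle G c) : (support c).Nonempty := by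
  obtain ⟨u, W, hW, rfl⟩ := hc
  obtain ⟨e, he⟩ := List.exists_mem_of_ne_nil _ (W.edges_eq_nil.not.2 hW.not_nil)
  exact ⟨⟨e, W.edges_subset_edgeSet he⟩, by simpa [support_walkChain]⟩

def supportGraph (G : SimpleGraph V) (c : G.edgeSet → ZMod 2) : SimpleGraph V :=
  SimpleGraph.fromEdgeSet ((↑) '' support c)

omit [Fintype V] [DecidableEq V] in
theorem supportGraph_adj {c : G.edgeSet → ZMod 2} {a b : V} :
    (supportGraph G c).Adj a b ↔ ∃ h : s(a, b) ∈ G.edgeSet, c ⟨s(a, b), h⟩ ≠ 0 := by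
  rw [supportGraph, SimpleGraph.fromEdgeSet_adj]
  constructor
  · rintro ⟨⟨⟨e, he⟩, hce, rfl⟩, -⟩
    exact ⟨he, hce⟩
  · rintro ⟨hab, hc⟩
    exact ⟨⟨⟨s(a, b), hab⟩, hc, rfl⟩, (SimpleGraph.mem_edgeSet G).1 hab |>.ne⟩

omit [Fintype V] [DecidableEq V] in
theorem supportGraph_le (c : G.edgeSet → ZMod 2) : supportGraph G c ≤ G :=
  fun _ _ h => (SimpleGraph.mem_edgeSet G).1 (supportGraph_adj.1 h).1

theorem exists_supportGraph_adj_ne {c : G.edgeSet → ZMod 2} (hc : c ∈ cycleSpace G) {u w : V}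
    (huw : (supportGraph G c).Adj u w) : ∃ w', (supportGraph G c).Adj u w' ∧ w' ≠ w := by
  by_contra! hcon
  obtain ⟨huw', hc0⟩ := supportGraph_adj.1 huw
  have hbd : boundaryMap G c u = 0 := congrFun (LinearMap.mem_ker.1 hc) u
  simp only [boundaryMap, Matrix.mulVecLin_apply, Matrix.mulVec, dotProduct, Matrix.of_apply,
    ite_mul, one_mul, zero_mul] at hbd
  rw [Finset.sum_eq_single ⟨s(u, w), huw'⟩ (fun e _ hne => ?_) (by simp),
    if_pos (Sym2.mem_mk_left u w)] at hbd
  · exact hc0 hbd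
  · refine ite_eq_right_iff.2 fun hue => ?_
    obtain ⟨e, he⟩ := e
    obtain ⟨y, rfl⟩ := Sym2.mem_iff_exists.1 hue
    by_contra hce
    exact hne (Subtype.ext (congrArg (s(u, ·)) (hcon y (supportGraph_adj.2 ⟨he, hce⟩))))

theorem not_isAcyclic_supportGraph {c : G.edgeSet → ZMod 2} (hc : c ∈ cycleSpace G)
    (hc0 : c ≠ 0) : ¬(supportGraph G c).IsAcyclic := by
  intro hacyc
  obtain ⟨e, he⟩ := Function.ne_iff.1 hc0
  have hedge : ∃ z : Sym2 V, ∃ h : z ∈ G.edgeSet, c ⟨z, h⟩ ≠ 0 := ⟨e, e.2, he⟩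
  obtain ⟨a, b, hab, hcab⟩ := Sym2.exists.1 hedge
  have hab' : (supportGraph G c).Adj a b := supportGraph_adj.2 ⟨hab, hcab⟩
  have : Nonempty V := ⟨a⟩
  obtain ⟨u, v, p, hp, hmax⟩ :=
    SimpleGraph.Walk.exists_isPath_forall_isPath_length_le_length (supportGraph G c)
  have hnil : ¬p.Nil := fun hnil => by
    have := hmax a b (.cons hab' .nil) (by simp [hab'.ne])
    simp [hnil.length_eq_zero] at this
  obtain ⟨w, huw, hw⟩ := exists_supportGraph_adj_ne hc (p.adj_snd hnil)
  by_cases hwp : w ∈ p.support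
  · exact hw (hacyc.eq_snd_of_adj_start hp huw hwp)
  · have := hmax w v (.cons huw.symm p) (hp.cons hwp)
    simp at this

theorem exists_isElementaryCycle_support_subset {c : G.edgeSet → ZMod 2} (hc : c ∈ cycleSpace G)
    (hc0 : c ≠ 0) : ∃ x, IsElementaryCycle G x ∧ support x ⊆ support c := by
  obtain ⟨u, W, hW⟩ : ∃ u, ∃ W : (supportGraph G c).Walk u u, W.IsCycle := by
    simpa [SimpleGraph.IsAcyclic] using not_isAcyclic_supportGraph hc hc0
  refine ⟨walkChain G (W.mapLe (supportGraph_le c)), ⟨u, _, hW.mapLe _, rfl⟩,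
    fun e he => ?_⟩
  rw [support_walkChain, SimpleGraph.Walk.edges_mapLe_eq_edges] at he
  have he' := W.edges_subset_edgeSet he
  rw [supportGraph, SimpleGraph.edgeSet_fromEdgeSet] at he'
  obtain ⟨⟨⟨e', he''⟩, hce, rfl⟩, -⟩ := he'
  exact hce

theorem mem_span_isElementaryCycle {c : G.edgeSet → ZMod 2} (hc : c ∈ cycleSpace G) :
    c ∈ span (ZMod 2) {x | IsElementaryCycle G x ∧ support x ⊆ support c} := by
  induction hn : (support c).ncard using Nat.strong_induction_on generalizing c with
  | _ n ih =>
  rcases eq_or_ne c 0 with rfl | hc0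
  · exact zero_mem _
  obtain ⟨x, hx, hxc⟩ := exists_isElementaryCycle_support_subset hc hc0
  have hsupp := support_add_of_subset hxc
  have hlt : (support (c + x)).ncard < n :=
    hn ▸ hsupp ▸ Set.ncard_lt_ncard (hxc.sdiff_ssubset_of_nonempty hx.support_nonempty)
  have hrest := ih _ hlt (add_mem hc hx.mem_cycleSpace) rfl
  have hsub : {y | IsElementaryCycle G y ∧ support y ⊆ support (c + x)} ⊆
      {y | IsElementaryCycle G y ∧ support y ⊆ support c} :=
    fun y hy => ⟨hy.1, hy.2.trans (hsupp ▸ Set.sdiff_subset)⟩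
  simpa using sub_mem (span_mono hsub hrest) (subset_span ⟨hx, hxc⟩)

end CycleSpace

section MinCycleBasis

variable {G : SimpleGraph V} {w : Sym2 V → ℝ}

theorem IsCycleBasis.exchange {B : Finset (G.edgeSet → ZMod 2)} (hB : IsCycleBasis G B)
    {c x : G.edgeSet → ZMod 2} (hx : x ∈ cycleSpace G)
    (hxc : x ∉ span (ZMod 2) (B.erase c : Set (G.edgeSet → ZMod 2))) :
    IsCycleBasis G (insert x (B.erase c)) := by
  obtain ⟨hind, hspan⟩ := hB
  rw [Finset.coe_erase] at hxc
  refine ⟨?_, ?_⟩ <;> rw [Finset.coe_insert, Finset.coe_erase]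
  · exact LinearIndepOn.id_insert (LinearIndepOn.mono hind Set.sdiff_subset) hxc
  · rw [span_insert_sdiff_singleton_eq (hspan ▸ hx) hxc, hspan]

omit [DecidableEq V] in
theorem cycleWeight_le_of_support_subset (hw : ∀ e, 0 ≤ w e) {x c : G.edgeSet → ZMod 2}
    (h : support x ⊆ support c) : cycleWeight G w x ≤ cycleWeight G w c := by
  refine Finset.sum_le_sum fun e _ => ?_
  by_cases hx : x e = 1
  · have hc : c e = 1 := (zmod_two_ne_zero_iff_eq_one _).1 <|
      h ((zmod_two_ne_zero_iff_eq_one _).2 hx)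
    rw [if_pos hx, if_pos hc]
  · rw [if_neg hx]
    split_ifs
    exacts [hw _, le_rfl]

theorem IsMinCycleBasis.exchange {B : Finset (G.edgeSet → ZMod 2)} (hB : IsMinCycleBasis G w B)
    {c x : G.edgeSet → ZMod 2} (hc : c ∈ B) (hx : x ∈ cycleSpace G)
    (hxc : x ∉ span (ZMod 2) (B.erase c : Set (G.edgeSet → ZMod 2)))
    (hle : cycleWeight G w x ≤ cycleWeight G w c) :
    IsMinCycleBasis G w (insert x (B.erase c)) := by
  refine ⟨hB.1.exchange hx hxc, fun B' hB' => le_trans ?_ (hB.2 B' hB')⟩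
  have := sum_insert_erase_add (cycleWeight G w) hc fun h => hxc (subset_span h)
  unfold setWeight
  linarith

theorem exists_isMinCycleBasis (G : SimpleGraph V) (w : Sym2 V → ℝ) :
    ∃ B, IsMinCycleBasis G w B := by
  obtain ⟨b, -, hbspan, hbind⟩ :=
    exists_linearIndependent (ZMod 2) (cycleSpace G : Set (G.edgeSet → ZMod 2))
  have hb : IsCycleBasis G (Set.toFinite b).toFinset := by
    rw [IsCycleBasis, Set.Finite.coe_toFinset, hbspan, span_eq]
    exact ⟨hbind, rfl⟩
  obtain ⟨B, hB, hmin⟩ := Set.exists_min_image {B | IsCycleBasis G B} (setWeight G w)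
    (Set.toFinite _) ⟨_, hb⟩
  exact ⟨B, hB, hmin⟩

theorem IsMinCycleBasis.exists_of_not_isElementaryCycle (hw : ∀ e, 0 ≤ w e)
    {B : Finset (G.edgeSet → ZMod 2)} (hB : IsMinCycleBasis G w B) {c : G.edgeSet → ZMod 2}
    (hc : c ∈ B) (hce : ¬IsElementaryCycle G c) :
    ∃ B', IsMinCycleBasis G w B' ∧
      ∑ b ∈ B', (support b).ncard < ∑ b ∈ B, (support b).ncard := by
  have hcC : c ∈ cycleSpace G := hB.1.2 ▸ subset_span hc
  have hcB : c ∉ span (ZMod 2) (B.erase c : Set (G.edgeSet → ZMod 2)) := by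
    have hind : LinearIndepOn (ZMod 2) id (B : Set (G.edgeSet → ZMod 2)) := hB.1.1
    simpa [Finset.coe_erase] using linearIndepOn_iff_notMem_span.1 hind c hc
  obtain ⟨x, ⟨hx, hxc⟩, hxB⟩ :
      ∃ x ∈ {x | IsElementaryCycle G x ∧ support x ⊆ support c},
        x ∉ span (ZMod 2) (B.erase c : Set (G.edgeSet → ZMod 2)) := by
    by_contra! h
    exact hcB (span_le.2 h (mem_span_isElementaryCycle hcC))
  have hlt : (support x).ncard < (support c).ncard :=
    Set.ncard_lt_ncard (support_ssubset_of_subset_of_ne hxc fun h => hce (h ▸ hx))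
  refine ⟨_, hB.exchange hc hx.mem_cycleSpace hxB (cycleWeight_le_of_support_subset hw hxc), ?_⟩
  have := sum_insert_erase_add (fun b => (support b).ncard) hc fun h => hxB (subset_span h)
  omega

end MinCycleBasis

theorem exists_min_cycle_basis_elementary_general (G : SimpleGraph V)
    (w : Sym2 V → ℝ) (hw : ∀ e, 0 ≤ w e) :
    ∃ B : Finset (G.edgeSet → ZMod 2), IsMinCycleBasis G w B ∧
      ∀ c ∈ B, IsElementaryCycle G c := by
  obtain ⟨B₀, hB₀⟩ := exists_isMinCycleBasis G w
  obtain ⟨B, hB, hmin⟩ := Set.exists_min_image {B | IsMinCycleBasis G w B}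
    (fun B => ∑ b ∈ B, (support b).ncard) (Set.toFinite _) ⟨B₀, hB₀⟩
  refine ⟨B, hB, fun c hc => by_contra fun hce => ?_⟩
  obtain ⟨B', hB', hlt⟩ := hB.exists_of_not_isElementaryCycle hw hc hce
  exact (hmin B' hB').not_gt hlt

/-- With non-negative edge weights there always exists a minimum cycle basis all of whose
elements are elementary cycles. -/
theorem exists_min_cycle_basis_elementary (G : SimpleGraph V) (hG : G.Connected)
    (w : Sym2 V → ℝ) (hw : ∀ e, 0 ≤ w e) :
    ∃ B : Finset (G.edgeSet → ZMod 2), IsMinCycleBasis G w B ∧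
      ∀ c ∈ B, IsElementaryCycle G c :=
  exists_min_cycle_basis_elementary_general G w hw

end PaperMCB
end
end

section
/- Let K be a connected simplicial complex with non-negative edge weights, and let M = {B₁, …, B_q, C₁, …, C_p} be a minimum cycle basis of the 1-skeleton K₁, where B₁, …, B_q are the null-homologous elements and C₁, …, C_p are the non-bounding elements, each list sorted in non-decreasing order of weight. Then there exist a minimum homology basis {ζ₁, …, ζ_g} of K indexed in non-decreasing order of weight and indices i₁ < i₂ < … < i_g with {C_{i₁}, …, C_{i_g}} ⊆ {C₁, …, C_p} such that for every k ∈ [1,g], C_{i_k} is homologous to a cycle in the span of ζ₁, …, ζ_k and w(C_{i_k}) = w(ζ_k); moreover i₁ = 1, and for k > 1, i_k is the smallest index such that C_{i_k} is not homologous to any cycle in the span of {C_{i₁}, …, C_{i_{k−1}}}. -/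
open scoped Classical

noncomputable section

namespace PaperMCB

variable {V : Type*} [Fintype V] [DecidableEq V]

/-- A (2-dimensional) simplicial complex, presented by its 1-skeleton `G`
together with its set of triangular 2-simplices. -/
structure SComplex (V : Type*) [Fintype V] [DecidableEq V] where
  G : SimpleGraph V
  faces : Finset (Finset V)
  card_faces : ∀ f ∈ faces, f.card = 3
  adj_of_faces : ∀ f ∈ faces, ∀ x ∈ f, ∀ y ∈ f, x ≠ y → G.Adj x y

/-- The boundary of a 2-simplex: the `ℤ₂` incidence vector of its three edges. -/
def faceChain (K : SComplex V) (f : Finset V) : K.G.edgeSet → ZMod 2 :=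
  fun e => if ∀ x ∈ (e : Sym2 V), x ∈ f then 1 else 0

/-- The boundary space `B₁(K) = im ∂₂`: the span of the boundaries of the 2-simplices. -/
def boundarySpace (K : SComplex V) : Submodule (ZMod 2) (K.G.edgeSet → ZMod 2) :=
  Submodule.span (ZMod 2) (faceChain K '' (K.faces : Set (Finset V)))

/-- Two chains are homologous if their `ℤ₂`-difference is a boundary. -/
def Homologous (K : SComplex V) (z z' : K.G.edgeSet → ZMod 2) : Prop :=
  z - z' ∈ boundarySpace K

/-- The first homology group `H₁(K) = Z₁(K)/B₁(K)`, realized as the image of the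
cycle space in the quotient by the boundary space. -/
def homologySpace (K : SComplex V) :
    Submodule (ZMod 2) ((K.G.edgeSet → ZMod 2) ⧸ boundarySpace K) :=
  (cycleSpace K.G).map (boundarySpace K).mkQ

/-- A homology basis: a set of 1-cycles whose homology classes form a basis of `H₁(K)`. -/
def IsHomologyBasis (K : SComplex V) (H : Finset (K.G.edgeSet → ZMod 2)) : Prop :=
  (∀ z ∈ H, z ∈ cycleSpace K.G) ∧
  LinearIndependent (ZMod 2)
    (fun z : (H : Set (K.G.edgeSet → ZMod 2)) => (boundarySpace K).mkQ (z : K.G.edgeSet → ZMod 2)) ∧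
  Submodule.span (ZMod 2)
      ((boundarySpace K).mkQ '' (H : Set (K.G.edgeSet → ZMod 2))) = homologySpace K

/-- A minimum homology basis is a homology basis of minimum total weight. -/
def IsMinHomologyBasis (K : SComplex V) (w : Sym2 V → ℝ)
    (H : Finset (K.G.edgeSet → ZMod 2)) : Prop :=
  IsHomologyBasis K H ∧
  ∀ H' : Finset (K.G.edgeSet → ZMod 2), IsHomologyBasis K H' →
    setWeight K.G w H ≤ setWeight K.G w H'



/-!
Since the `Bⱼ` are null-homologous, the classes of the `Cᵢ` span `H₁(K)`; keeping every `Cᵢ`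
whose class is not spanned by the classes of `C₁, …, C_{i-1}` gives a homology basis `ζ`, with
`ζₖ = C_{i_k}`. A cycle whose class lies outside the span of the classes of the `Cᵢ`, `i < i_k`,
involves some `Cᵢ` with `i ≥ i_k` in its expansion in the minimum cycle basis; exchanging that
`Cᵢ` for the cycle gives another cycle basis, so the cycle weighs at least `w(Cᵢ) ≥ w(ζₖ)`.
Among the `k + 1` lightest elements of any homology basis one has its class outside that
`k`-dimensional span, so the `k`-th lightest weighs at least `w(ζₖ)`; summing over `k` proves
minimality.
-/

open Set Submodule Function

section Greedy

variable {R M ι : Type*} [DivisionRing R] [AddCommGroup M] [Module R M]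
  [LinearOrder ι] [Fintype ι]

variable (R) in
def greedyIndices (v : ι → M) : Finset ι :=
  {i | v i ∉ span R (v '' Iio i)}

theorem mem_greedyIndices {v : ι → M} {i : ι} :
    i ∈ greedyIndices R v ↔ v i ∉ span R (v '' Iio i) := by
  simp [greedyIndices]

theorem mem_greedyIndices_of_isMin {v : ι → M} {i : ι} (hi : IsMin i) (hv : v i ≠ 0) :
    i ∈ greedyIndices R v := by
  rw [mem_greedyIndices, hi.Iio_eq, image_empty, span_empty, mem_bot]
  exact hv

theorem mem_span_image_greedyIndices_inter_Iic (v : ι → M) (i : ι) :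
    v i ∈ span R (v '' (greedyIndices R v ∩ Iic i)) := by
  induction i using WellFoundedLT.induction with
  | ind i ih =>
    by_cases hi : i ∈ greedyIndices R v
    · exact subset_span ⟨i, ⟨hi, le_rfl⟩, rfl⟩
    · refine span_le.2 ?_ (not_not.mp (mem_greedyIndices.not.mp hi))
      rintro _ ⟨j, hj, rfl⟩
      have hsub : (greedyIndices R v : Set ι) ∩ Iic j ⊆ greedyIndices R v ∩ Iic i :=
        inter_subset_inter_right _ (Iic_subset_Iic.2 (le_of_lt hj))
      exact span_mono (image_mono hsub) (ih j hj)

theorem span_image_greedyIndices_inter_Iio (v : ι → M) (i : ι) :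
    span R (v '' (greedyIndices R v ∩ Iio i)) = span R (v '' Iio i) := by
  refine le_antisymm (span_mono (image_mono inter_subset_right)) (span_le.2 ?_)
  rintro _ ⟨j, hj, rfl⟩
  have hsub : (greedyIndices R v : Set ι) ∩ Iic j ⊆ greedyIndices R v ∩ Iio i :=
    inter_subset_inter_right _ (Iic_subset_Iio.2 hj)
  exact span_mono (image_mono hsub) (mem_span_image_greedyIndices_inter_Iic v j)

theorem span_image_greedyIndices (v : ι → M) :
    span R (v '' greedyIndices R v) = span R (range v) := by
  refine le_antisymm (span_mono (image_subset_range _ _)) (span_le.2 ?_)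
  rintro _ ⟨i, rfl⟩
  exact span_mono (image_mono inter_subset_left) (mem_span_image_greedyIndices_inter_Iic v i)

theorem linearIndepOn_greedyIndices (v : ι → M) :
    LinearIndepOn R v (greedyIndices R v) := by
  suffices ∀ s ⊆ greedyIndices R v, LinearIndepOn R v (s : Set ι) from this _ subset_rfl
  intro s
  induction s using Finset.induction_on_max with
  | empty => simp
  | insert a s hlt ih =>
    intro hs
    rw [Finset.coe_insert]
    refine (ih ((Finset.subset_insert a s).trans hs)).insert fun ha => ?_
    refine mem_greedyIndices.mp (hs (Finset.mem_insert_self a s)) (span_mono ?_ ha)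
    exact image_mono fun x hx => hlt x hx

end Greedy

theorem _root_.LinearIndepOn.card_le_card_of_forall_mem_span {R M α : Type*} [DivisionRing R]
    [AddCommGroup M] [Module R M] {f : α → M} {t : Finset α} (ht : LinearIndepOn R f t)
    {T : Finset M} (hmem : ∀ y ∈ t, f y ∈ span R (T : Set M)) : t.card ≤ T.card := by
  have := linearIndependent_le_span' _ ht (T : Set M) (by rintro _ ⟨y, rfl⟩; exact hmem y y.2)
  simpa using this

theorem _root_.Finset.sum_le_sum_of_forall_exists_le {α β : Type*} [AddCommMonoid β]
    [LinearOrder β] [IsOrderedAddMonoid β] {n : ℕ} (s : Finset α) (hs : s.card = n)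
    (f : Fin n → β) (wt : α → β)
    (h : ∀ k : Fin n, ∀ t ⊆ s, t.card = k + 1 → ∃ y ∈ t, f k ≤ wt y) :
    ∑ k, f k ≤ ∑ y ∈ s, wt y := by
  let e : s ≃ Fin n := Fintype.equivFinOfCardEq (by simpa using hs)
  let σ := Tuple.sort (fun k => wt (e.symm k))
  let u : Fin n → α := fun k => e.symm (σ k)
  have hu : Injective u := Subtype.val_injective.comp (e.symm.injective.comp σ.injective)
  have hmono : Monotone (wt ∘ u) := Tuple.monotone_sort (fun k => wt (e.symm k))
  have hle : ∀ k, f k ≤ wt (u k) := by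
    intro k
    obtain ⟨y, hy, hfy⟩ := h k ((Finset.Iic k).image u)
      (by rintro _ hy; obtain ⟨j, -, rfl⟩ := Finset.mem_image.mp hy; exact (e.symm (σ j)).2)
      (by rw [Finset.card_image_of_injective _ hu, Fin.card_Iic])
    obtain ⟨j, hj, rfl⟩ := Finset.mem_image.mp hy
    exact hfy.trans (hmono (Finset.mem_Iic.mp hj))
  calc ∑ k, f k ≤ ∑ k, wt (u k) := Finset.sum_le_sum fun k _ => hle k
    _ = ∑ y : s, wt y := Fintype.sum_equiv (σ.trans e.symm) _ _ fun _ => rfl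
    _ = ∑ y ∈ s, wt y := Finset.sum_coe_sort s wt

theorem _root_.Submodule.span_range_update_sum_smul {K M ι : Type*} [Field K] [AddCommGroup M]
    [Module K M] [Fintype ι] [DecidableEq ι] (v : ι → M) (r : ι → K) {j : ι}
    (hj : r j ≠ 0) :
    span K (range (update v j (∑ i, r i • v i))) = span K (range v) := by
  have hv : ∀ i ≠ j, v i ∈ span K (range (update v j (∑ i, r i • v i))) := fun i hi =>
    subset_span ⟨i, update_of_ne hi _ _⟩
  refine le_antisymm (span_le.2 ?_) (span_le.2 ?_)
  · rintro _ ⟨i, rfl⟩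
    rcases eq_or_ne i j with rfl | hi
    · rw [update_self]
      exact sum_mem fun i _ => smul_mem _ _ (subset_span (mem_range_self i))
    · rw [update_of_ne hi]
      exact subset_span (mem_range_self i)
  · rintro _ ⟨i, rfl⟩
    rcases eq_or_ne i j with rfl | hi
    · have hsum :
          r i • v i = (∑ k, r k • v k) - ∑ k ∈ Finset.univ.erase i, r k • v k := by
        rw [← Finset.add_sum_erase _ _ (Finset.mem_univ i), add_sub_cancel_right]
      rw [SetLike.mem_coe, ← smul_mem_iff _ hj, hsum]
      refine sub_mem (subset_span ⟨i, update_self _ _ _⟩) (sum_mem fun k hk => ?_)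
      exact smul_mem _ _ (hv k (Finset.ne_of_mem_erase hk))
    · exact hv i hi

section CycleBasis

variable {G : SimpleGraph V} {w : Sym2 V → ℝ} {ι : Type*} [Fintype ι]
  {M : ι → (G.edgeSet → ZMod 2)}

set_option linter.unusedSectionVars false in
theorem setWeight_image_s9 (hM : Injective M) :
    setWeight G w (Finset.image M Finset.univ) = ∑ i, cycleWeight G w (M i) :=
  Finset.sum_image fun _ _ _ _ h => hM h

theorem isCycleBasis_image_iff (hM : Injective M) :
    IsCycleBasis G (Finset.image M Finset.univ) ↔
      LinearIndependent (ZMod 2) M ∧ span (ZMod 2) (range M) = cycleSpace G := by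
  rw [IsCycleBasis, Finset.coe_image, Finset.coe_univ, image_univ]
  exact and_congr_left' (linearIndepOn_id_range_iff hM)

theorem IsMinCycleBasis.cycleWeight_le_of_coeff_ne_zero (hM : Injective M)
    (hmin : IsMinCycleBasis G w (Finset.image M Finset.univ)) (r : ι → ZMod 2) {j : ι}
    (hj : r j ≠ 0) : cycleWeight G w (M j) ≤ cycleWeight G w (∑ i, r i • M i) := by
  obtain ⟨hli, hspan⟩ := (isCycleBasis_image_iff hM).mp hmin.1
  set x := ∑ i, r i • M i
  have hli' : LinearIndependent (ZMod 2) (update M j x) :=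
    hli.update j x ⟨1, one_mem _, (Finsupp.linearEquivFunOnFinite (ZMod 2) (ZMod 2) ι).symm r,
      mem_nonZeroDivisors_of_ne_zero (by simpa using hj), by
        rw [one_smul, Finsupp.linearCombination_eq_fintype_linearCombination_apply,
          Fintype.linearCombination_apply]⟩
  have hle := hmin.2 _ ((isCycleBasis_image_iff hli'.injective).mpr
    ⟨hli', (span_range_update_sum_smul M r hj).trans hspan⟩)
  rw [setWeight_image_s9 hM, setWeight_image_s9 hli'.injective,
    ← Finset.add_sum_erase _ _ (Finset.mem_univ j),
    ← Finset.add_sum_erase _ _ (Finset.mem_univ j)] at hle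
  have hrest : ∑ i ∈ Finset.univ.erase j, cycleWeight G w (update M j x i) =
      ∑ i ∈ Finset.univ.erase j, cycleWeight G w (M i) :=
    Finset.sum_congr rfl fun i hi => by rw [update_of_ne (Finset.ne_of_mem_erase hi)]
  rw [hrest, update_self] at hle
  linarith

end CycleBasis

theorem _root_.Finset.orderEmbOfFin_image_Iio {α : Type*} [LinearOrder α] (s : Finset α)
    {k : ℕ} (h : s.card = k) (i : Fin k) :
    s.orderEmbOfFin h '' Iio i = ↑s ∩ Iio (s.orderEmbOfFin h i) := by
  ext a
  constructor
  · rintro ⟨j, hj, rfl⟩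
    exact ⟨s.orderEmbOfFin_mem h j, (s.orderEmbOfFin h).strictMono hj⟩
  · rintro ⟨ha, hlt⟩
    obtain ⟨j, rfl⟩ : a ∈ range (s.orderEmbOfFin h) := by rwa [Finset.range_orderEmbOfFin]
    exact ⟨j, (s.orderEmbOfFin h).lt_iff_lt.mp hlt, rfl⟩

section Homology

variable {K : SComplex V}

theorem homologous_iff_mkQ_eq {y z : K.G.edgeSet → ZMod 2} :
    Homologous K y z ↔ (boundarySpace K).mkQ y = (boundarySpace K).mkQ z :=
  (Submodule.Quotient.eq _).symm

theorem exists_homologous_mem_span_iff {y : K.G.edgeSet → ZMod 2}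
    {s : Set (K.G.edgeSet → ZMod 2)} :
    (∃ z ∈ span (ZMod 2) s, Homologous K y z) ↔
      (boundarySpace K).mkQ y ∈ span (ZMod 2) ((boundarySpace K).mkQ '' s) := by
  rw [← map_span, mem_map]
  simp only [homologous_iff_mkQ_eq, eq_comm]

theorem IsHomologyBasis.card_eq_finrank {H : Finset (K.G.edgeSet → ZMod 2)}
    (hH : IsHomologyBasis K H) : H.card = Module.finrank (ZMod 2) (homologySpace K) := by
  rw [← hH.2.2, image_eq_range, finrank_span_eq_card hH.2.1]
  simp

theorem homologySpace_eq_span_range {κ ι : Type*} {B : κ → (K.G.edgeSet → ZMod 2)}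
    {C : ι → (K.G.edgeSet → ZMod 2)}
    (hspan : span (ZMod 2) (range (Sum.elim B C)) = cycleSpace K.G)
    (hB : ∀ j, B j ∈ boundarySpace K) :
    homologySpace K = span (ZMod 2) (range ((boundarySpace K).mkQ ∘ C)) := by
  have hB0 : span (ZMod 2) (range ((boundarySpace K).mkQ ∘ B)) = ⊥ :=
    span_eq_bot.2 fun _ ⟨j, hj⟩ => hj ▸ (Submodule.Quotient.mk_eq_zero _).2 (hB j)
  rw [homologySpace, ← hspan, map_span, ← range_comp, Sum.comp_elim, Sum.elim_range,
    span_union, hB0, bot_sup_eq]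

theorem IsHomologyBasis.isMinHomologyBasis_of_forall_notMem_span {w : Sym2 V → ℝ} {g : ℕ}
    {ζ : Fin g → (K.G.edgeSet → ZMod 2)} (hH : IsHomologyBasis K (Finset.image ζ Finset.univ))
    (hζ : Injective ζ)
    (hle : ∀ k : Fin g, ∃ T : Finset ((K.G.edgeSet → ZMod 2) ⧸ boundarySpace K),
      T.card ≤ k ∧ ∀ x ∈ cycleSpace K.G,
        (boundarySpace K).mkQ x ∉ span (ZMod 2) (T : Set _) →
          cycleWeight K.G w (ζ k) ≤ cycleWeight K.G w x) :
    IsMinHomologyBasis K w (Finset.image ζ Finset.univ) := by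
  refine ⟨hH, fun H' hH' => ?_⟩
  have hcard : H'.card = g := by
    rw [hH'.card_eq_finrank, ← hH.card_eq_finrank, Finset.card_image_of_injective _ hζ,
      Finset.card_fin]
  rw [setWeight_image_s9 hζ, setWeight]
  refine Finset.sum_le_sum_of_forall_exists_le H' hcard _ _ fun k t ht htk => ?_
  obtain ⟨T, hTk, hT⟩ := hle k
  by_contra! hlt
  -- `k + 1` independent classes cannot all lie in the span of `k` vectors
  have := (LinearIndepOn.mono hH'.2.1 (Finset.coe_subset.2 ht)).card_le_card_of_forall_mem_span
    fun y hy => not_not.mp fun hy' => (hlt y hy).not_ge (hT y (hH'.1 y (ht hy)) hy')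
  omega

end Homology

section MinCycleBasis

variable {K : SComplex V} {κ ι : Type*} [Fintype ι] [LinearOrder ι]
  {B : κ → (K.G.edgeSet → ZMod 2)} {C : ι → (K.G.edgeSet → ZMod 2)}

theorem cycleWeight_le_of_mkQ_notMem_span [Fintype κ] {w : Sym2 V → ℝ}
    (hMinj : Injective (Sum.elim B C))
    (hMmin : IsMinCycleBasis K.G w (Finset.image (Sum.elim B C) Finset.univ))
    (hBnull : ∀ j, B j ∈ boundarySpace K) (hCsort : Monotone (cycleWeight K.G w ∘ C))
    (i₀ : ι) {x : K.G.edgeSet → ZMod 2} (hx : x ∈ cycleSpace K.G)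
    (hxW : (boundarySpace K).mkQ x ∉ span (ZMod 2) ((boundarySpace K).mkQ ∘ C '' Iio i₀)) :
    cycleWeight K.G w (C i₀) ≤ cycleWeight K.G w x := by
  obtain ⟨-, hspan⟩ := (isCycleBasis_image_iff hMinj).mp hMmin.1
  obtain ⟨r, rfl⟩ := (mem_span_range_iff_exists_fun _).mp (hspan ▸ hx)
  obtain ⟨i, hri, hi⟩ : ∃ i, r (Sum.inr i) ≠ 0 ∧ i₀ ≤ i := by
    by_contra! h
    refine hxW ?_
    rw [map_sum, Fintype.sum_sum_type]
    refine add_mem (sum_mem fun j _ => ?_) (sum_mem fun i _ => ?_)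
    · simp [(Submodule.Quotient.mk_eq_zero _).2 (hBnull j)]
    · rcases eq_or_ne (r (Sum.inr i)) 0 with h0 | h0
      · simp [h0]
      · rw [map_smul]
        exact smul_mem _ _ (subset_span ⟨i, h i h0, rfl⟩)
  calc cycleWeight K.G w (C i₀) ≤ cycleWeight K.G w (C i) := hCsort hi
    _ ≤ _ := hMmin.cycleWeight_le_of_coeff_ne_zero hMinj r hri

theorem isHomologyBasis_image_greedyIndices
    (hspan : span (ZMod 2) (range (Sum.elim B C)) = cycleSpace K.G)
    (hBnull : ∀ j, B j ∈ boundarySpace K) :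
    IsHomologyBasis K ((greedyIndices (ZMod 2) ((boundarySpace K).mkQ ∘ C)).image C) := by
  refine ⟨fun z hz => ?_, ?_, ?_⟩
  · obtain ⟨i, -, rfl⟩ := Finset.mem_image.mp hz
    exact hspan ▸ subset_span ⟨Sum.inr i, rfl⟩
  · show LinearIndepOn _ _ _
    rw [Finset.coe_image]
    exact (linearIndepOn_greedyIndices _).image_of_comp _ _
  · rw [Finset.coe_image, ← image_comp, span_image_greedyIndices,
      homologySpace_eq_span_range hspan hBnull]

end MinCycleBasis

theorem min_cycle_basis_contains_min_homology_basis_general (K : SComplex V)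
    (w : Sym2 V → ℝ)
    {q p : ℕ} (B : Fin q → (K.G.edgeSet → ZMod 2)) (C : Fin p → (K.G.edgeSet → ZMod 2))
    (hMinj : Function.Injective (Sum.elim B C))
    (hMmin : IsMinCycleBasis K.G w (Finset.image (Sum.elim B C) Finset.univ))
    (hBnull : ∀ j, B j ∈ boundarySpace K)
    (hCnon : ∀ i, C i ∉ boundarySpace K)
    (hCsort : ∀ i j : Fin p, i ≤ j → cycleWeight K.G w (C i) ≤ cycleWeight K.G w (C j))
 :
    ∃ (g : ℕ) (ζ : Fin g → (K.G.edgeSet → ZMod 2)) (idx : Fin g → Fin p),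
      Function.Injective ζ ∧
      IsMinHomologyBasis K w (Finset.image ζ Finset.univ) ∧
      (∀ i j : Fin g, i ≤ j → cycleWeight K.G w (ζ i) ≤ cycleWeight K.G w (ζ j)) ∧
      StrictMono idx ∧
      (∀ k : Fin g,
        (∃ z ∈ Submodule.span (ZMod 2) (ζ '' {j : Fin g | j ≤ k}),
          Homologous K (C (idx k)) z) ∧
        cycleWeight K.G w (C (idx k)) = cycleWeight K.G w (ζ k)) ∧
      (∀ hg : 0 < g, (idx ⟨0, hg⟩ : ℕ) = 0) ∧
      (∀ k : Fin g, 0 < (k : ℕ) →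
        IsLeast {i : Fin p |
            ¬ ∃ z ∈ Submodule.span (ZMod 2) (C '' (idx '' {j : Fin g | j < k})),
              Homologous K (C i) z}
          (idx k)) := by
  set π := (boundarySpace K).mkQ
  set S := greedyIndices (ZMod 2) (π ∘ C)
  set idx := S.orderEmbOfFin rfl
  have hspan_idx : ∀ k, span (ZMod 2) (π ∘ C '' (idx '' Iio k)) =
      span (ZMod 2) (π ∘ C '' Iio (idx k)) := fun k => by
    rw [Finset.orderEmbOfFin_image_Iio, span_image_greedyIndices_inter_Iio]
  have hζ : Injective (C ∘ idx) := (hMinj.comp Sum.inr_injective).comp idx.injective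
  have hH : IsHomologyBasis K (Finset.image (C ∘ idx) Finset.univ) := by
    rw [← Finset.image_image, Finset.image_orderEmbOfFin_univ]
    exact isHomologyBasis_image_greedyIndices ((isCycleBasis_image_iff hMinj).mp hMmin.1).2 hBnull
  refine ⟨S.card, C ∘ idx, idx, hζ, hH.isMinHomologyBasis_of_forall_notMem_span hζ fun k =>
      ⟨(Finset.Iio k).image ((π ∘ C) ∘ idx), ?_, fun x hx hxW =>
        cycleWeight_le_of_mkQ_notMem_span hMinj hMmin hBnull (fun i j => hCsort i j) (idx k)
          hx ?_⟩,
    fun i j hij => hCsort _ _ (idx.monotone hij), idx.strictMono,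
    fun k => ⟨⟨C (idx k), subset_span ⟨k, le_refl k, rfl⟩, homologous_iff_mkQ_eq.2 rfl⟩,
      rfl⟩,
    fun hg => ?_, fun k _ => ?_⟩
  · exact Finset.card_image_le.trans (Fin.card_Iio k).le
  · rwa [Finset.coe_image, Finset.coe_Iio, image_comp, hspan_idx] at hxW
  · have hp : 0 < p := (idx ⟨0, hg⟩).pos
    have h0 : (⟨0, hp⟩ : Fin p) ∈ S := mem_greedyIndices_of_isMin (fun j _ => Nat.zero_le j)
      (mt (Submodule.Quotient.mk_eq_zero _).1 (hCnon _))
    rw [Finset.orderEmbOfFin_zero]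
    exact Nat.le_zero.mp (S.min'_le _ h0)
  · simp only [exists_homologous_mem_span_iff]
    change IsLeast {i | π (C i) ∉ span (ZMod 2) (π '' (C '' (idx '' Iio k)))} (idx k)
    rw [← image_comp, hspan_idx]
    exact ⟨mem_greedyIndices.1 (S.orderEmbOfFin_mem rfl k),
      fun i hi => not_lt.1 fun hlt => hi (subset_span ⟨i, hlt, rfl⟩)⟩

/-- Theorem 5: from a minimum cycle basis `M = {B₁,…,B_q, C₁,…,C_p}` one can extract,
greedily, indices `i₁ < … < i_g` and a minimum homology basis `ζ₁,…,ζ_g` such that each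
`C_{i_k}` is homologous to a cycle spanned by `ζ₁,…,ζ_k` and has the same weight as `ζ_k`;
moreover `i₁ = 1` and `i_k` is the smallest index whose cycle is not homologous to any
cycle spanned by the previously chosen ones. -/
theorem min_cycle_basis_contains_min_homology_basis (K : SComplex V) (hK : K.G.Connected)
    (w : Sym2 V → ℝ) (hw : ∀ e, 0 ≤ w e)
    {q p : ℕ} (B : Fin q → (K.G.edgeSet → ZMod 2)) (C : Fin p → (K.G.edgeSet → ZMod 2))
    (hMinj : Function.Injective (Sum.elim B C))
    (hMmin : IsMinCycleBasis K.G w (Finset.image (Sum.elim B C) Finset.univ))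
    (hBnull : ∀ j, B j ∈ boundarySpace K)
    (hCnon : ∀ i, C i ∉ boundarySpace K)
    (hBsort : ∀ i j : Fin q, i ≤ j → cycleWeight K.G w (B i) ≤ cycleWeight K.G w (B j))
    (hCsort : ∀ i j : Fin p, i ≤ j → cycleWeight K.G w (C i) ≤ cycleWeight K.G w (C j))
 :
    ∃ (g : ℕ) (ζ : Fin g → (K.G.edgeSet → ZMod 2)) (idx : Fin g → Fin p),
      Function.Injective ζ ∧
      IsMinHomologyBasis K w (Finset.image ζ Finset.univ) ∧
      (∀ i j : Fin g, i ≤ j → cycleWeight K.G w (ζ i) ≤ cycleWeight K.G w (ζ j)) ∧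
      StrictMono idx ∧
      (∀ k : Fin g,
        (∃ z ∈ Submodule.span (ZMod 2) (ζ '' {j : Fin g | j ≤ k}),
          Homologous K (C (idx k)) z) ∧
        cycleWeight K.G w (C (idx k)) = cycleWeight K.G w (ζ k)) ∧
      (∀ hg : 0 < g, (idx ⟨0, hg⟩ : ℕ) = 0) ∧
      (∀ k : Fin g, 0 < (k : ℕ) →
        IsLeast {i : Fin p |
            ¬ ∃ z ∈ Submodule.span (ZMod 2) (C '' (idx '' {j : Fin g | j < k})),
              Homologous K (C i) z}
          (idx k)) :=
  min_cycle_basis_contains_min_homology_basis_general K w B C hMinj hMmin hBnull hCnon hCsort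

end PaperMCB
end
end

section
/- Let V be a finite-dimensional vector space over ℤ₂, let v₁, …, v_s be a list of vectors spanning a subspace of dimension r, and let w : {1, …, s} → ℝ assign each vector a weight with w(1) ≤ w(2) ≤ … ≤ w(s). Suppose that among the sets of r linearly independent vectors chosen from v₁, …, v_s there is one of minimum total weight contained in the list. Let i₁ < … < i_r be the lexicographically smallest sequence of indices such that v_{i₁}, …, v_{i_r} are linearly independent. Then {v_{i₁}, …, v_{i_r}} is a set of r linearly independent vectors from the list of minimum total weight. -/
/-!
Let `I` be the lexicographically least basis. For every index `t`, each `v j` with `j < t` lies in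
the span of `{v i | i ∈ I, i < t}`: otherwise `j ∉ I`, and completing `{i ∈ I | i < t} ∪ {j}` by
elements of `I` gives a basis that agrees with `I` below `j` and contains `j`, hence is
lexicographically smaller. So any independent `J` has at most as many indices below `t` as `I`,
i.e. the `k`-th smallest index of `I` is at most that of `J`, and monotonicity of `w` compares
the sums termwise.
-/

open Finset Submodule

namespace List

variable {α : Type*} [LinearOrder α]

theorem lex_lt_of_agree_below : ∀ {l₁ l₂ : List α}, l₁.Pairwise (· < ·) → l₂.Pairwise (· < ·) →
    ∀ {b : α}, b ∈ l₁ → b ∉ l₂ → (∀ x < b, x ∈ l₁ ↔ x ∈ l₂) → l₁.length ≤ l₂.length →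
    Lex (· < ·) l₁ l₂
  | [], _, _, _, _, hb, _, _, _ => absurd hb not_mem_nil
  | _ :: _, [], _, _, _, _, _, _, hlen => absurd hlen (by simp)
  | a :: t₁, c :: t₂, h₁, h₂, b, hb₁, hb₂, hagree, hlen => by
    rw [pairwise_cons] at h₁ h₂
    rcases lt_trichotomy a c with hac | rfl | hca
    · exact .rel hac
    · have hba : b ≠ a := by rintro rfl; exact hb₂ mem_cons_self
      refine .cons (lex_lt_of_agree_below h₁.2 h₂.2 ((mem_cons.1 hb₁).resolve_left hba)
        (fun h => hb₂ (mem_cons_of_mem _ h)) (fun x hx => ?_) (by simpa using hlen))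
      by_cases hxa : x = a
      · subst hxa
        exact iff_of_false (fun h => lt_irrefl _ (h₁.1 x h)) (fun h => lt_irrefl _ (h₂.1 x h))
      · simpa [hxa] using hagree x hx
    · have hab : a ≤ b := by
        rcases mem_cons.1 hb₁ with rfl | hb
        exacts [le_rfl, (h₁.1 b hb).le]
      rcases mem_cons.1 ((hagree c (hca.trans_le hab)).2 mem_cons_self) with rfl | hc
      exacts [(lt_irrefl _ hca).elim, (lt_asymm hca (h₁.1 c hc)).elim]

end List

namespace Finset

variable {α : Type*} [LinearOrder α]

theorem sort_lex_lt_of_agree_below {s t : Finset α} {b : α} (hbs : b ∈ s) (hbt : b ∉ t)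
    (hagree : ∀ x < b, x ∈ s ↔ x ∈ t) (hcard : #s ≤ #t) :
    List.Lex (· < ·) (s.sort (· ≤ ·)) (t.sort (· ≤ ·)) :=
  List.lex_lt_of_agree_below (sortedLT_sort s).pairwise (sortedLT_sort t).pairwise
    ((mem_sort _).2 hbs) (by simpa using hbt) (by simpa using hagree) (by simpa using hcard)

theorem card_filter_lt_orderEmbOfFin (s : Finset α) {k : ℕ} (h : #s = k) (i : Fin k) :
    #{x ∈ s | x < s.orderEmbOfFin h i} = i := by
  have : {x ∈ s | x < s.orderEmbOfFin h i} = (Iio i).map (s.orderEmbOfFin h).toEmbedding := by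
    ext x
    constructor
    · intro hx
      rw [mem_filter] at hx
      obtain ⟨j, rfl⟩ : x ∈ Set.range (s.orderEmbOfFin h) := by
        rw [range_orderEmbOfFin]; exact hx.1
      simpa using hx.2
    · intro hx
      simp only [mem_map, mem_Iio] at hx
      obtain ⟨j, hj, rfl⟩ := hx
      simpa [orderEmbOfFin_mem] using hj
  rw [this, card_map, Fin.card_Iio]

theorem orderEmbOfFin_le_of_card_filter_lt_le {s t : Finset α} {k : ℕ} (hs : #s = k) (ht : #t = k)
    (h : ∀ a, #{x ∈ t | x < a} ≤ #{x ∈ s | x < a}) (i : Fin k) :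
    s.orderEmbOfFin hs i ≤ t.orderEmbOfFin ht i := by
  by_contra! hlt
  have hsub : {x ∈ t | x < t.orderEmbOfFin ht i} ⊂ {x ∈ t | x < s.orderEmbOfFin hs i} :=
    (ssubset_iff_of_subset fun x hx => by
      simp only [mem_filter] at hx ⊢; exact ⟨hx.1, hx.2.trans hlt⟩).2
      ⟨t.orderEmbOfFin ht i, by simp [orderEmbOfFin_mem, hlt], by simp⟩
  have := (card_lt_card hsub).trans_le (h _)
  rw [card_filter_lt_orderEmbOfFin, card_filter_lt_orderEmbOfFin] at this
  exact lt_irrefl _ this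

theorem sum_le_sum_of_card_filter_lt_le {β : Type*} [AddCommMonoid β] [PartialOrder β]
    [IsOrderedAddMonoid β] {f : α → β} (hf : Monotone f) {s t : Finset α} (hcard : #s = #t)
    (h : ∀ a, #{x ∈ t | x < a} ≤ #{x ∈ s | x < a}) : ∑ x ∈ s, f x ≤ ∑ x ∈ t, f x := by
  rw [← map_orderEmbOfFin_univ s rfl, ← map_orderEmbOfFin_univ t hcard.symm, sum_map, sum_map]
  exact sum_le_sum fun i _ => hf (orderEmbOfFin_le_of_card_filter_lt_le rfl hcard.symm h i)

end Finset

section LinearAlgebra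

variable {ι K M : Type*} [DivisionRing K] [AddCommGroup M] [Module K M] {v : ι → M}

theorem LinearIndepOn.card_le_card_of_image_subset_span {s t : Finset ι}
    (hs : LinearIndepOn K v s) (h : v '' s ⊆ span K (v '' t)) : #s ≤ #t := by
  classical
  have := linearIndependent_le_span_aux' (fun i : (s : Set ι) => v i) hs (t.image v)
    (by rw [← Set.image_eq_range, coe_image]; exact h)
  simp only [coe_sort_coe, Fintype.card_coe] at this
  exact this.trans card_image_le

theorem LinearIndepOn.exists_finset_extension {s t : Finset ι} (hs : LinearIndepOn K v s)
    (hst : s ⊆ t) :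
    ∃ u : Finset ι, s ⊆ u ∧ u ⊆ t ∧ v '' t ⊆ span K (v '' u) ∧ LinearIndepOn K v u := by
  obtain ⟨b, hbt, hsb, hspan, hb⟩ := exists_linearIndepOn_extension hs (coe_subset.2 hst)
  obtain ⟨u, rfl⟩ := (t.finite_toSet.subset hbt).exists_finset_coe
  exact ⟨u, coe_subset.1 hsb, coe_subset.1 hbt, hspan, hb⟩

theorem LinearIndepOn.range_subset_span_of_card_eq_finrank [Finite ι] {s : Finset ι}
    (hs : LinearIndepOn K v s) (h : #s = Module.finrank K (span K (Set.range v))) :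
    Set.range v ⊆ span K (v '' s) := by
  have hle : span K (v '' s) ≤ span K (Set.range v) := span_mono (Set.image_subset_range _ _)
  have hrank : Module.finrank K (span K (v '' s)) = #s := by
    rw [Set.image_eq_range, finrank_span_eq_card hs]
    simp
  have := FiniteDimensional.span_of_finite K (Set.finite_range v)
  rw [eq_of_le_of_finrank_eq hle (hrank.trans h)]
  exact subset_span

theorem LinearIndepOn.image_Iio_subset_span_of_lex_least [LinearOrder ι] {I : Finset ι}
    (hI : LinearIndepOn K v I) (hspan : Set.range v ⊆ span K (v '' I))
    (hlex : ∀ J : Finset ι, #J = #I → LinearIndepOn K v J →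
      I = J ∨ List.Lex (· < ·) (I.sort (· ≤ ·)) (J.sort (· ≤ ·)))
    (t : ι) : v '' Set.Iio t ⊆ span K (v '' ↑(I.filter (· < t))) := by
  rintro _ ⟨j, hjt, rfl⟩
  by_contra hj
  have hjI : j ∉ I := fun h => hj (subset_span ⟨j, mem_filter.2 ⟨h, hjt⟩, rfl⟩)
  have hC : LinearIndepOn K v ↑(insert j (I.filter (· < t))) := by
    rw [coe_insert]
    exact (hI.mono (filter_subset _ I)).insert hj
  obtain ⟨D, hCD, hDI, hID, hD⟩ :=
    hC.exists_finset_extension (insert_subset_insert j (filter_subset _ I))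
  have hcard : #D = #I := le_antisymm
    (hD.card_le_card_of_image_subset_span ((Set.image_subset_range _ _).trans hspan))
    (hI.card_le_card_of_image_subset_span
      ((Set.image_mono (coe_subset.2 (subset_insert j I))).trans hID))
  have hjD : j ∈ D := hCD (mem_insert_self _ _)
  have hagree : ∀ x < j, x ∈ D ↔ x ∈ I := fun x hx =>
    ⟨fun hxD => (mem_insert.1 (hDI hxD)).resolve_left hx.ne,
      fun hxI => hCD (mem_insert_of_mem (mem_filter.2 ⟨hxI, hx.trans hjt⟩))⟩
  rcases hlex D hcard hD with rfl | hlt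
  · exact hjI hjD
  · exact asymm hlt (sort_lex_lt_of_agree_below hjD hjI hagree hcard.le)

end LinearAlgebra

namespace PaperMCB

theorem lex_smallest_independent_has_min_weight_general
    {M : Type*} [AddCommGroup M] [Module (ZMod 2) M]
    {s : ℕ} (v : Fin s → M) (w : Fin s → ℝ) (hsort : Monotone w)
    (r : ℕ) (hr : r = Module.finrank (ZMod 2) (Submodule.span (ZMod 2) (Set.range v)))
    (I : Finset (Fin s)) (hIcard : I.card = r)
    (hIind : LinearIndependent (ZMod 2) (fun i : (I : Set (Fin s)) => v (i : Fin s)))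
    (hIlex : ∀ J : Finset (Fin s), J.card = r →
      LinearIndependent (ZMod 2) (fun j : (J : Set (Fin s)) => v (j : Fin s)) →
      I = J ∨ List.Lex (· < ·) (I.sort (· ≤ ·)) (J.sort (· ≤ ·))) :
    I.card = r ∧
    LinearIndependent (ZMod 2) (fun i : (I : Set (Fin s)) => v (i : Fin s)) ∧
    ∀ J : Finset (Fin s), J.card = r →
      LinearIndependent (ZMod 2) (fun j : (J : Set (Fin s)) => v (j : Fin s)) →
      ∑ i ∈ I, w i ≤ ∑ j ∈ J, w j := by
  subst hIcard
  have hspan := LinearIndepOn.range_subset_span_of_card_eq_finrank hIind hr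
  refine ⟨rfl, hIind, fun J hJ hJind => sum_le_sum_of_card_filter_lt_le hsort hJ.symm fun t => ?_⟩
  refine LinearIndepOn.card_le_card_of_image_subset_span
    (LinearIndepOn.mono hJind (filter_subset _ J)) ?_
  have hbelow : ↑(J.filter (· < t)) ⊆ Set.Iio t := fun j hj => (mem_filter.1 hj).2
  exact (Set.image_mono hbelow).trans
    (LinearIndepOn.image_Iio_subset_span_of_lex_least hIind hspan hIlex t)

/-- The greedy/matroid principle behind the earliest-basis algorithms: given a list of
vectors over `ℤ₂` sorted in non-decreasing order of weight, the lexicographically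
smallest sequence of `r` indices of linearly independent vectors yields a set of `r`
linearly independent vectors of minimum total weight. -/
theorem lex_smallest_independent_has_min_weight
    {M : Type*} [AddCommGroup M] [Module (ZMod 2) M] [FiniteDimensional (ZMod 2) M]
    {s : ℕ} (v : Fin s → M) (w : Fin s → ℝ) (hsort : Monotone w)
    (r : ℕ) (hr : r = Module.finrank (ZMod 2) (Submodule.span (ZMod 2) (Set.range v)))
    (hexists : ∃ I₀ : Finset (Fin s), I₀.card = r ∧
      LinearIndependent (ZMod 2) (fun i : (I₀ : Set (Fin s)) => v (i : Fin s)) ∧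
      ∀ J : Finset (Fin s), J.card = r →
        LinearIndependent (ZMod 2) (fun j : (J : Set (Fin s)) => v (j : Fin s)) →
        ∑ i ∈ I₀, w i ≤ ∑ j ∈ J, w j)
    (I : Finset (Fin s)) (hIcard : I.card = r)
    (hIind : LinearIndependent (ZMod 2) (fun i : (I : Set (Fin s)) => v (i : Fin s)))
    (hIlex : ∀ J : Finset (Fin s), J.card = r →
      LinearIndependent (ZMod 2) (fun j : (J : Set (Fin s)) => v (j : Fin s)) →
      I = J ∨ List.Lex (· < ·) (I.sort (· ≤ ·)) (J.sort (· ≤ ·))) :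
    I.card = r ∧
    LinearIndependent (ZMod 2) (fun i : (I : Set (Fin s)) => v (i : Fin s)) ∧
    ∀ J : Finset (Fin s), J.card = r →
      LinearIndependent (ZMod 2) (fun j : (J : Set (Fin s)) => v (j : Fin s)) →
      ∑ i ∈ I, w i ≤ ∑ j ∈ J, w j :=
  lex_smallest_independent_has_min_weight_general v w hsort r hr I hIcard hIind hIlex

end PaperMCB
end
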